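/- arXiv:1007.2493 — 4 statements merged into one kernel-verified Lean document; each statement's English description precedes it below -/
import Mathlib

section
/- Let N ≥ 1, J(x) = J₀ + Σ_{p=1}^N J_p·cos(2px), and I(x) = I₀ + Σ_{p=1}^N (a_p·cos(2px) + b_p·sin(2px)) with real coefficients, let λ > 0 and ε, θ ∈ ℝ. If V : ℝ → ℝ is continuous and satisfies the stationary voltage equation V(x) = (1/π)·∫_{−π/2}^{π/2} J(x − y)·S(λ·V(y)) dy + ε·I(x) − θ for all x, then there exist real numbers c₀, c₁, …, c_N, s₁, …, s_N such that V(x) = c₀ + Σ_{p=1}^N (c_p·cos(2px) + s_p·sin(2px)) for all x; i.e., every stationary solution is a trigonometric polynomial in the even harmonics up to order 2N. -/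
/-
The trigonometric polynomials `c₀ + ∑_{p ≤ N} (c_p cos 2px + s_p sin 2px)` form a vector space that is
stable under convolution `x ↦ ∫ K(x - y) g(y) dy` with any integrable `g`, because the addition formulas
for `cos (ω(x - y))` and `sin (ω(x - y))` separate the variables. The stationary equation exhibits `V` as
such a convolution of the kernel `J` (with `g = S(λV)`, continuous), plus a multiple of `I`, minus a
constant.
-/

open Real

/-- The logistic sigmoid. -/
noncomputable def S (x : ℝ) : ℝ := 1 / (1 + Real.exp (-x))

theorem S_eq_sigmoid : S = Real.sigmoid :=
  funext fun x => by simp [S, Real.sigmoid_def]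

theorem continuous_S : Continuous S := S_eq_sigmoid ▸ continuous_sigmoid

open MeasureTheory

section Convolution

variable {g : ℝ → ℝ} {a b : ℝ}

theorem integral_cos_sub_mul (hg : IntervalIntegrable g volume a b) (ω x : ℝ) :
    ∫ y in a..b, cos (ω * (x - y)) * g y =
      cos (ω * x) * (∫ y in a..b, cos (ω * y) * g y)
        + sin (ω * x) * ∫ y in a..b, sin (ω * y) * g y := by
  simp_rw [mul_sub, cos_sub, add_mul, mul_assoc]
  rw [intervalIntegral.integral_add, intervalIntegral.integral_const_mul,
    intervalIntegral.integral_const_mul]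
  all_goals exact (hg.continuousOn_mul (by fun_prop)).const_mul _

theorem integral_sin_sub_mul (hg : IntervalIntegrable g volume a b) (ω x : ℝ) :
    ∫ y in a..b, sin (ω * (x - y)) * g y =
      sin (ω * x) * (∫ y in a..b, cos (ω * y) * g y)
        - cos (ω * x) * ∫ y in a..b, sin (ω * y) * g y := by
  simp_rw [mul_sub, sin_sub, sub_mul, mul_assoc]
  rw [intervalIntegral.integral_sub, intervalIntegral.integral_const_mul,
    intervalIntegral.integral_const_mul]
  all_goals exact (hg.continuousOn_mul (by fun_prop)).const_mul _

end Convolution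

def evenTrigPoly (N : ℕ) : Submodule ℝ (ℝ → ℝ) where
  carrier := {f | ∃ c s : ℕ → ℝ, ∀ x, f x = c 0 + ∑ p ∈ Finset.Icc 1 N,
    (c p * cos (2 * p * x) + s p * sin (2 * p * x))}
  add_mem' := by
    rintro f g ⟨c, s, hf⟩ ⟨c', s', hg⟩
    refine ⟨c + c', s + s', fun x => ?_⟩
    simp only [Pi.add_apply, hf, hg, add_mul, Finset.sum_add_distrib]
    ring
  zero_mem' := ⟨0, 0, by simp⟩
  smul_mem' := by
    rintro r f ⟨c, s, hf⟩
    refine ⟨r • c, r • s, fun x => ?_⟩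
    simp only [Pi.smul_apply, smul_eq_mul, hf, mul_add, Finset.mul_sum, mul_assoc]

namespace evenTrigPoly

variable {N : ℕ}

theorem mem_of_eq {f : ℝ → ℝ} (c₀ : ℝ) (c s : ℕ → ℝ)
    (hf : ∀ x, f x = c₀ + ∑ p ∈ Finset.Icc 1 N, (c p * cos (2 * p * x) + s p * sin (2 * p * x))) :
    f ∈ evenTrigPoly N := by
  refine ⟨Function.update c 0 c₀, s, fun x => ?_⟩
  rw [hf, Function.update_self]
  congr 1
  refine Finset.sum_congr rfl fun p hp => ?_
  rw [Function.update_of_ne (by grind)]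

theorem const_mem (r : ℝ) : Function.const ℝ r ∈ evenTrigPoly N :=
  mem_of_eq r 0 0 fun x => by simp

theorem integral_comp_sub_mul_mem {K g : ℝ → ℝ} {a b : ℝ}
    (hK : K ∈ evenTrigPoly N) (hg : IntervalIntegrable g volume a b) :
    (fun x => ∫ y in a..b, K (x - y) * g y) ∈ evenTrigPoly N := by
  obtain ⟨c, s, hK⟩ := hK
  set A : ℕ → ℝ := fun p => ∫ y in a..b, cos (2 * p * y) * g y
  set B : ℕ → ℝ := fun p => ∫ y in a..b, sin (2 * p * y) * g y
  refine mem_of_eq (c 0 * ∫ y in a..b, g y) (fun p => c p * A p - s p * B p)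
    (fun p => c p * B p + s p * A p) fun x => ?_
  have hmul : ∀ f : ℝ → ℝ, Continuous f →
      IntervalIntegrable (fun y => f y * g y) volume a b :=
    fun f hf => hg.continuousOn_mul hf.continuousOn
  have hpt : ∀ y, K (x - y) * g y = c 0 * g y + ∑ p ∈ Finset.Icc 1 N,
      (c p * (cos (2 * p * (x - y)) * g y) + s p * (sin (2 * p * (x - y)) * g y)) := by
    intro y
    simp only [hK, add_mul, Finset.sum_mul, mul_assoc]
  simp only [hpt]
  rw [intervalIntegral.integral_add, intervalIntegral.integral_const_mul,
    intervalIntegral.integral_finsetSum]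
  · congr 1
    refine Finset.sum_congr rfl fun p _ => ?_
    rw [intervalIntegral.integral_add, intervalIntegral.integral_const_mul,
      intervalIntegral.integral_const_mul, integral_cos_sub_mul hg, integral_sin_sub_mul hg]
    · ring
    all_goals exact (hmul _ (by fun_prop)).const_mul _
  · exact fun p _ => ((hmul _ (by fun_prop)).const_mul _).add ((hmul _ (by fun_prop)).const_mul _)
  · exact hg.const_mul _
  · have := IntervalIntegrable.sum (Finset.Icc 1 N) fun p _ =>
      ((hmul (fun y => cos (2 * p * (x - y))) (by fun_prop)).const_mul (c p)).add
        ((hmul (fun y => sin (2 * p * (x - y))) (by fun_prop)).const_mul (s p))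
    simpa only [Finset.sum_fn] using this

end evenTrigPoly

theorem stmt_8_general (N : ℕ) (J : ℕ → ℝ) (I₀ : ℝ) (a b : ℕ → ℝ)
    (lam ε θ : ℝ)
    (Jfun Ifun : ℝ → ℝ)
    (hJfun : ∀ x, Jfun x = J 0 + ∑ p ∈ Finset.Icc 1 N, J p * Real.cos (2 * p * x))
    (hIfun : ∀ x, Ifun x = I₀ + ∑ p ∈ Finset.Icc 1 N,
      (a p * Real.cos (2 * p * x) + b p * Real.sin (2 * p * x)))
    (V : ℝ → ℝ) (hVc : Continuous V)
    (hstat : ∀ x, V x =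
      (1 / π) * (∫ y in (-(π/2))..(π/2), Jfun (x - y) * S (lam * V y))
        + ε * Ifun x - θ) :
    ∃ c s : ℕ → ℝ, ∀ x, V x = c 0 + ∑ p ∈ Finset.Icc 1 N,
      (c p * Real.cos (2 * p * x) + s p * Real.sin (2 * p * x)) := by
  have hJ : Jfun ∈ evenTrigPoly N := evenTrigPoly.mem_of_eq (J 0) J 0 fun x => by simp [hJfun]
  have hI : Ifun ∈ evenTrigPoly N := evenTrigPoly.mem_of_eq I₀ a b hIfun
  have hconv := evenTrigPoly.integral_comp_sub_mul_mem (g := fun y => S (lam * V y)) hJ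
    ((continuous_S.comp (continuous_const.mul hVc)).intervalIntegrable (-(π/2)) (π/2))
  have hV : V = (1 / π) • (fun x => ∫ y in (-(π/2))..(π/2), Jfun (x - y) * S (lam * V y))
      + ε • Ifun - Function.const ℝ θ :=
    funext fun x => by simp [hstat x]
  rw [hV]
  exact sub_mem (add_mem (Submodule.smul_mem _ _ hconv) (Submodule.smul_mem _ _ hI))
    (evenTrigPoly.const_mem θ)

/-- every continuous stationary solution of the voltage Ring Model with a
trigonometric-polynomial kernel and input is itself a trigonometric polynomial in the
even harmonics up to order `2N`. -/
theorem stmt_8 (N : ℕ) (hN : 1 ≤ N) (J : ℕ → ℝ) (I₀ : ℝ) (a b : ℕ → ℝ)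
    (lam ε θ : ℝ) (hlam : 0 < lam)
    (Jfun Ifun : ℝ → ℝ)
    (hJfun : ∀ x, Jfun x = J 0 + ∑ p ∈ Finset.Icc 1 N, J p * Real.cos (2 * p * x))
    (hIfun : ∀ x, Ifun x = I₀ + ∑ p ∈ Finset.Icc 1 N,
      (a p * Real.cos (2 * p * x) + b p * Real.sin (2 * p * x)))
    (V : ℝ → ℝ) (hVc : Continuous V)
    (hstat : ∀ x, V x =
      (1 / π) * (∫ y in (-(π/2))..(π/2), Jfun (x - y) * S (lam * V y))
        + ε * Ifun x - θ) :
    ∃ c s : ℕ → ℝ, ∀ x, V x = c 0 + ∑ p ∈ Finset.Icc 1 N,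
      (c p * Real.cos (2 * p * x) + s p * Real.sin (2 * p * x)) :=
  stmt_8_general N J I₀ a b lam ε θ Jfun Ifun hJfun hIfun V hVc hstat
end

section
/- Let λ > 0, J₁ > 0, ε₀ ∈ {−1,1}, ε, β, θ ∈ ℝ, and define B₀(v₀, ρ) = (1/π)·∫_{−π/2}^{π/2} S(λ·(v₀ + √J₁·ρ·cos(2x))) dx and B̃₁(v₀, ρ) = (√J₁/π)·∫_{−π/2}^{π/2} S(λ·(v₀ + √J₁·ρ·cos(2x)))·cos(2x) dx. Then (v₀, ρ) satisfies the 'even-phase' stationary system { v₀ = ε₀·B₀(v₀, ρ) + ε·(1 − β) − θ ; ρ = B̃₁(v₀, ρ) + ε·β/√J₁ } if and only if (v₀, −ρ) satisfies the 'odd-phase' stationary system { v₀ = ε₀·B₀(v₀, ρ′) + ε·(1 − β) − θ ; ρ′ = B̃₁(v₀, ρ′) − ε·β/√J₁ }. In particular the amplitudes of the even-phase and odd-phase tuning curves satisfy ρ_e = −ρ_o. -/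
/-!
Shifting `x` by `π/2` flips the sign of `cos (2x)` while `x ↦ f (cos (2x))` is `π`-periodic, so
the integral of `f (-cos (2x))` over a period equals that of `f (cos (2x))`. Hence `B₀` is even and
`B̃₁` is odd in `ρ`, and the odd-phase system at `-ρ` is the even-phase system at `ρ`.
-/

open Real

theorem integral_comp_neg_cos_two_mul (f : ℝ → ℝ) :
    ∫ x in (-(π/2))..(π/2), f (-cos (2 * x)) = ∫ x in (-(π/2))..(π/2), f (cos (2 * x)) := by
  have hshift (x : ℝ) : -cos (2 * x) = cos (2 * (x + π/2)) := by
    rw [show 2 * (x + π/2) = 2 * x + π by ring, cos_add_pi]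
  have hper : Function.Periodic (fun x => f (cos (2 * x))) π := fun x => by
    simp only [show 2 * (x + π) = 2 * x + 2 * π by ring, cos_add_two_pi]
  simp only [hshift]
  rw [intervalIntegral.integral_comp_add_right (fun x => f (cos (2 * x))),
    show -(π/2) + π/2 = (0:ℝ) by ring, show π/2 + π/2 = (0:ℝ) + π by ring,
    hper.intervalIntegral_add_eq 0 (-(π/2)), show -(π/2) + π = π/2 by ring]

theorem stmt_10_general (lam J₁ ε₀ ε β θ : ℝ)
    (B₀ B₁t : ℝ → ℝ → ℝ)
    (hB₀ : ∀ v₀ ρ, B₀ v₀ ρ =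
      (1 / π) * ∫ x in (-(π/2))..(π/2), S (lam * (v₀ + Real.sqrt J₁ * ρ * Real.cos (2 * x))))
    (hB₁t : ∀ v₀ ρ, B₁t v₀ ρ =
      (Real.sqrt J₁ / π) * ∫ x in (-(π/2))..(π/2),
        S (lam * (v₀ + Real.sqrt J₁ * ρ * Real.cos (2 * x))) * Real.cos (2 * x)) :
    ∀ v₀ ρ : ℝ,
      (v₀ = ε₀ * B₀ v₀ ρ + ε * (1 - β) - θ ∧
        ρ = B₁t v₀ ρ + ε * β / Real.sqrt J₁) ↔
      (v₀ = ε₀ * B₀ v₀ (-ρ) + ε * (1 - β) - θ ∧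
        -ρ = B₁t v₀ (-ρ) - ε * β / Real.sqrt J₁) := by
  intro v₀ ρ
  have hB₀_neg : B₀ v₀ (-ρ) = B₀ v₀ ρ := by
    rw [hB₀, hB₀, ← integral_comp_neg_cos_two_mul (fun c => S (lam * (v₀ + √J₁ * ρ * c)))]
    simp only [mul_neg, neg_mul]
  have hB₁t_neg : B₁t v₀ (-ρ) = -B₁t v₀ ρ := by
    have h := integral_comp_neg_cos_two_mul (fun c => S (lam * (v₀ + √J₁ * ρ * c)) * c)
    simp only [hB₁t, ← h, ← mul_neg, ← intervalIntegral.integral_neg]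
    ring_nf
  rw [hB₀_neg, hB₁t_neg]
  constructor <;> rintro ⟨hv₀, hρ⟩ <;> exact ⟨hv₀, by linarith⟩

/-- `(v₀, ρ)` satisfies the even-phase stationary system iff `(v₀, −ρ)`
satisfies the odd-phase stationary system; in particular `ρ_e = −ρ_o`. -/
theorem stmt_10 (lam J₁ ε₀ ε β θ : ℝ) (hlam : 0 < lam) (hJ₁ : 0 < J₁)
    (hε₀ : ε₀ = -1 ∨ ε₀ = 1)
    (B₀ B₁t : ℝ → ℝ → ℝ)
    (hB₀ : ∀ v₀ ρ, B₀ v₀ ρ =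
      (1 / π) * ∫ x in (-(π/2))..(π/2), S (lam * (v₀ + Real.sqrt J₁ * ρ * Real.cos (2 * x))))
    (hB₁t : ∀ v₀ ρ, B₁t v₀ ρ =
      (Real.sqrt J₁ / π) * ∫ x in (-(π/2))..(π/2),
        S (lam * (v₀ + Real.sqrt J₁ * ρ * Real.cos (2 * x))) * Real.cos (2 * x)) :
    ∀ v₀ ρ : ℝ,
      (v₀ = ε₀ * B₀ v₀ ρ + ε * (1 - β) - θ ∧
        ρ = B₁t v₀ ρ + ε * β / Real.sqrt J₁) ↔
      (v₀ = ε₀ * B₀ v₀ (-ρ) + ε * (1 - β) - θ ∧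
        -ρ = B₁t v₀ (-ρ) - ε * β / Real.sqrt J₁) :=
  stmt_10_general lam J₁ ε₀ ε β θ B₀ B₁t hB₀ hB₁t
end

section
/- Let a, b, c, d : ℝ → ℝ be continuous and let z₁, z₂ : ℝ → ℂ be differentiable functions satisfying ż₁(t) = a(t)·z₁(t) + b(t)·conj(z₁(t))·z₂(t) and ż₂(t) = c(t)·z₂(t) + d(t)·z₁(t)². Define π₁(t) = |z₁(t)|², π₂(t) = |z₂(t)|², π₃(t) = Re(z₁(t)²·conj(z₂(t))). Then π₁, π₂, π₃ are differentiable and satisfy the orbit-space equations π̇₁ = 2a·π₁ + 2b·π₃, π̇₂ = 2c·π₂ + 2d·π₃, and π̇₃ = (2a + c)·π₃ + 2b·π₁·π₂ + d·π₁². -/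
open Complex ComplexConjugate

open scoped InnerProductSpace

/-! Each invariant is a real inner product on `ℂ ≅ ℝ²`: `π₁ = ‖z₁‖²`, `π₂ = ‖z₂‖²` and
`π₃ = ⟪z₂, z₁²⟫_ℝ`. Differentiating by the product rule and substituting the vector field
leaves three polynomial identities in `z₁, z₂, conj z₁, conj z₂` with real coefficients. -/

lemma inner_sq_eq_re (x y : ℂ) : ⟪y, x ^ 2⟫_ℝ = (x ^ 2 * conj y).re :=
  Complex.inner y (x ^ 2)

section NormalForm

variable (a b c d : ℝ) (x y : ℂ)

lemma two_mul_inner_normalForm₁ :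
    2 * ⟪x, a * x + b * conj x * y⟫_ℝ = 2 * a * ‖x‖ ^ 2 + 2 * b * ⟪y, x ^ 2⟫_ℝ := by
  simp only [Complex.sq_norm]
  simp only [Complex.inner, normSq_apply, pow_two, mul_re, mul_im, add_re, add_im, ofReal_re,
    ofReal_im, conj_re, conj_im]
  ring

lemma two_mul_inner_normalForm₂ :
    2 * ⟪y, c * y + d * x ^ 2⟫_ℝ = 2 * c * ‖y‖ ^ 2 + 2 * d * ⟪y, x ^ 2⟫_ℝ := by
  simp only [Complex.sq_norm]
  simp only [Complex.inner, normSq_apply, pow_two, mul_re, mul_im, add_re, add_im, ofReal_re,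
    ofReal_im, conj_re, conj_im]
  ring

lemma inner_normalForm_add_inner_normalForm :
    ⟪y, 2 * x * (a * x + b * conj x * y)⟫_ℝ + ⟪c * y + d * x ^ 2, x ^ 2⟫_ℝ =
      (2 * a + c) * ⟪y, x ^ 2⟫_ℝ + 2 * b * ‖x‖ ^ 2 * ‖y‖ ^ 2 + d * (‖x‖ ^ 2) ^ 2 := by
  simp only [Complex.sq_norm]
  simp only [Complex.inner, normSq_apply, pow_two, map_add, map_mul, conj_ofReal, mul_re, mul_im,
    add_re, add_im, ofReal_re, ofReal_im, conj_re, conj_im, re_ofNat, im_ofNat]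
  ring

end NormalForm

theorem stmt_16_general (a b c d : ℝ → ℝ)
    (z₁ z₂ : ℝ → ℂ)
    (hz₁ : ∀ t, HasDerivAt z₁ ((a t : ℂ) * z₁ t + (b t : ℂ) * (starRingEnd ℂ) (z₁ t) * z₂ t) t)
    (hz₂ : ∀ t, HasDerivAt z₂ ((c t : ℂ) * z₂ t + (d t : ℂ) * (z₁ t)^2) t)
    (π₁ π₂ π₃ : ℝ → ℝ)
    (hπ₁ : ∀ t, π₁ t = ‖z₁ t‖^2)
    (hπ₂ : ∀ t, π₂ t = ‖z₂ t‖^2)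
    (hπ₃ : ∀ t, π₃ t = ((z₁ t)^2 * (starRingEnd ℂ) (z₂ t)).re) :
    ∀ t : ℝ,
      HasDerivAt π₁ (2 * a t * π₁ t + 2 * b t * π₃ t) t ∧
      HasDerivAt π₂ (2 * c t * π₂ t + 2 * d t * π₃ t) t ∧
      HasDerivAt π₃ ((2 * a t + c t) * π₃ t + 2 * b t * π₁ t * π₂ t + d t * (π₁ t)^2) t := by
  obtain rfl : π₁ = fun s => ‖z₁ s‖ ^ 2 := funext hπ₁
  obtain rfl : π₂ = fun s => ‖z₂ s‖ ^ 2 := funext hπ₂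
  obtain rfl : π₃ = fun s => ⟪z₂ s, z₁ s ^ 2⟫_ℝ := funext fun s => (hπ₃ s).trans
    (inner_sq_eq_re (z₁ s) (z₂ s)).symm
  intro t
  have hsq := ((hz₁ t).fun_pow 2).congr_deriv (by ring :
    _ = 2 * z₁ t * ((a t : ℂ) * z₁ t + (b t : ℂ) * conj (z₁ t) * z₂ t))
  exact ⟨(hz₁ t).norm_sq.congr_deriv (two_mul_inner_normalForm₁ (a t) (b t) (z₁ t) (z₂ t)),
    (hz₂ t).norm_sq.congr_deriv (two_mul_inner_normalForm₂ (c t) (d t) (z₁ t) (z₂ t)),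
    ((hz₂ t).inner ℝ hsq).congr_deriv
      (inner_normalForm_add_inner_normalForm (a t) (b t) (c t) (d t) (z₁ t) (z₂ t))⟩

/-- if `z₁, z₂` solve the normal-form ODEs, then the invariants
`π₁ = |z₁|²`, `π₂ = |z₂|²`, `π₃ = Re(z₁²·conj z₂)` are differentiable and solve
the orbit-space equations. -/
theorem stmt_16 (a b c d : ℝ → ℝ) (ha : Continuous a) (hb : Continuous b)
    (hc : Continuous c) (hd : Continuous d)
    (z₁ z₂ : ℝ → ℂ)
    (hz₁ : ∀ t, HasDerivAt z₁ ((a t : ℂ) * z₁ t + (b t : ℂ) * (starRingEnd ℂ) (z₁ t) * z₂ t) t)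
    (hz₂ : ∀ t, HasDerivAt z₂ ((c t : ℂ) * z₂ t + (d t : ℂ) * (z₁ t)^2) t)
    (π₁ π₂ π₃ : ℝ → ℝ)
    (hπ₁ : ∀ t, π₁ t = ‖z₁ t‖^2)
    (hπ₂ : ∀ t, π₂ t = ‖z₂ t‖^2)
    (hπ₃ : ∀ t, π₃ t = ((z₁ t)^2 * (starRingEnd ℂ) (z₂ t)).re) :
    ∀ t : ℝ,
      HasDerivAt π₁ (2 * a t * π₁ t + 2 * b t * π₃ t) t ∧
      HasDerivAt π₂ (2 * c t * π₂ t + 2 * d t * π₃ t) t ∧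
      HasDerivAt π₃ ((2 * a t + c t) * π₃ t + 2 * b t * π₁ t * π₂ t + d t * (π₁ t)^2) t :=
  stmt_16_general a b c d z₁ z₂ hz₁ hz₂ π₁ π₂ π₃ hπ₁ hπ₂ hπ₃
end

section
/- Let N ≥ 1, λ > 0, real numbers J₁, …, J_N and signs ε₁, …, ε_N ∈ {−1,1}, and for v₀ ∈ ℝ and z = (z₁, …, z_N) ∈ ℂᴺ define B₀(v₀, z) = (1/π)·∫_{−π/2}^{π/2} S(λ·(v₀ + Σ_{p=1}^N √|J_p|·Re(z_p·e^{−2ipy}))) dy and, for 1 ≤ k ≤ N, B_k(v₀, z) = (ε_k·√|J_k|/π)·∫_{−π/2}^{π/2} S(λ·(v₀ + Σ_{p=1}^N √|J_p|·Re(z_p·e^{−2ipy})))·e^{2iky} dy. Then for every γ ∈ ℝ: B₀(v₀, (e^{2ipγ}·z_p)_p) = B₀(v₀, z) and B_k(v₀, (e^{2ipγ}·z_p)_p) = e^{2ikγ}·B_k(v₀, z) for 1 ≤ k ≤ N; moreover B₀(v₀, (conj(z_p))_p) = B₀(v₀, z) and B_k(v₀, (conj(z_p))_p) = conj(B_k(v₀,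 z)). Thus the finite-dimensional Ring Model system with zero input is O(2)-equivariant under T_γ·(v₀, z₁, …, z_N) = (v₀, e^{2iγ}z₁, …, e^{2iNγ}z_N) and R·(v₀, z₁, …, z_N) = (v₀, conj(z₁), …, conj(z_N)). -/
/-!
The rotation `T_γ` translates the integrand `g_z(y)` of `B₀` and `B_k`:
`g_{T_γ z}(y) = g_z(y - γ)`, while conjugation reflects it: `g_{conj z}(y) = g_z(-y)`.
Since `g_z` is `π`-periodic, its integral over a period is invariant under translation and
its Fourier coefficients against `e^{2iky}` pick up the factor `e^{2ikγ}`. Reflection preserves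
the symmetric interval of integration and, `g_z` being real, conjugates those coefficients.
-/

open Real Complex

noncomputable def trigSum (s : Finset ℕ) (a : ℕ → ℝ) (z : ℕ → ℂ) (y : ℝ) : ℝ :=
  ∑ p ∈ s, a p * (z p * Complex.exp (-(2 * p * y) * Complex.I)).re

theorem trigSum_rotate (s : Finset ℕ) (a : ℕ → ℝ) (z : ℕ → ℂ) (γ y : ℝ) :
    trigSum s a (fun p => Complex.exp (2 * p * γ * Complex.I) * z p) y
      = trigSum s a z (y - γ) := by
  unfold trigSum
  refine Finset.sum_congr rfl fun p _ => ?_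
  dsimp only
  rw [mul_comm (Complex.exp _) (z p), mul_assoc, ← Complex.exp_add]
  push_cast
  ring_nf

theorem trigSum_conj (s : Finset ℕ) (a : ℕ → ℝ) (z : ℕ → ℂ) (y : ℝ) :
    trigSum s a (fun p => starRingEnd ℂ (z p)) y = trigSum s a z (-y) := by
  unfold trigSum
  refine Finset.sum_congr rfl fun p _ => ?_
  dsimp only
  rw [← Complex.conj_re, map_mul, Complex.conj_conj, ← Complex.exp_conj]
  simp only [map_mul, map_neg, Complex.conj_I, map_ofNat, Complex.conj_ofReal,
    Complex.conj_natCast]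
  push_cast
  ring_nf

theorem exp_two_int_mul_mul_I_periodic (k : ℤ) :
    Function.Periodic (fun y : ℝ => Complex.exp (2 * k * y * Complex.I)) π := by
  intro y
  dsimp only
  rw [show 2 * (k : ℂ) * ((y + π : ℝ) : ℂ) * Complex.I
      = 2 * k * y * Complex.I + k * (2 * π * Complex.I) by push_cast; ring,
    Complex.exp_add, Complex.exp_int_mul_two_pi_mul_I, mul_one]

theorem trigSum_periodic (s : Finset ℕ) (a : ℕ → ℝ) (z : ℕ → ℂ) :
    Function.Periodic (trigSum s a z) π := by
  intro y
  have h := trigSum_rotate s a z (-π) y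
  have hone : ∀ p : ℕ, Complex.exp (2 * p * ((-π : ℝ) : ℂ) * Complex.I) = 1 := fun p => by
    simpa using exp_two_int_mul_mul_I_periodic (-p) 0
  simp only [hone, one_mul, sub_neg_eq_add] at h
  exact h.symm

theorem intervalIntegral_comp_sub_of_periodic {E : Type*} [NormedAddCommGroup E]
    [NormedSpace ℝ E] {f : ℝ → E} {T : ℝ} (hf : Function.Periodic f T) (γ : ℝ) :
    ∫ y in (-(T / 2))..(T / 2), f (y - γ) = ∫ y in (-(T / 2))..(T / 2), f y := by
  have h := hf.intervalIntegral_add_eq (-(T / 2) - γ) (-(T / 2))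
  rw [show -(T / 2) - γ + T = T / 2 - γ by ring, show -(T / 2) + T = T / 2 by ring] at h
  rw [intervalIntegral.integral_comp_sub_right, h]

theorem intervalIntegral_comp_sub_mul_exp {g : ℝ → ℂ} (hg : Function.Periodic g π)
    (k : ℤ) (γ : ℝ) :
    ∫ y in (-(π / 2))..(π / 2), g (y - γ) * Complex.exp (2 * k * y * Complex.I)
      = Complex.exp (2 * k * γ * Complex.I)
        * ∫ y in (-(π / 2))..(π / 2), g y * Complex.exp (2 * k * y * Complex.I) := by
  have hper : Function.Periodic (fun y => g y * Complex.exp (2 * k * y * Complex.I)) π :=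
    hg.mul (exp_two_int_mul_mul_I_periodic k)
  rw [← intervalIntegral_comp_sub_of_periodic hper γ, ← intervalIntegral.integral_const_mul]
  refine intervalIntegral.integral_congr fun y _ => ?_
  rw [mul_left_comm, ← Complex.exp_add]
  push_cast
  ring_nf

theorem intervalIntegral_comp_neg_mul_exp (g : ℝ → ℝ) (k a : ℝ) :
    ∫ y in (-a)..a, (g (-y) : ℂ) * Complex.exp (2 * k * y * Complex.I)
      = starRingEnd ℂ (∫ y in (-a)..a, (g y : ℂ) * Complex.exp (2 * k * y * Complex.I)) := by
  have hconj : ∀ y : ℝ, (g (-y) : ℂ) * Complex.exp (2 * k * y * Complex.I)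
      = starRingEnd ℂ ((g (-y) : ℂ) * Complex.exp (2 * k * ((-y : ℝ) : ℂ) * Complex.I)) := by
    intro y
    rw [map_mul, Complex.conj_ofReal, ← Complex.exp_conj]
    simp only [map_mul, Complex.conj_I, Complex.conj_ofReal, map_ofNat]
    push_cast
    ring_nf
  simp only [hconj]
  rw [intervalIntegral.intervalIntegral_conj,
    intervalIntegral.integral_comp_neg (fun y => (g y : ℂ) * Complex.exp (2 * k * y * Complex.I)),
    neg_neg]

theorem stmt_18_general (N : ℕ) (lam : ℝ)
    (J ε : ℕ → ℝ)
    (B₀ : ℝ → (ℕ → ℂ) → ℝ) (B : ℕ → ℝ → (ℕ → ℂ) → ℂ)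
    (hB₀ : ∀ v₀ z, B₀ v₀ z = (1 / π) * ∫ y in (-(π/2))..(π/2),
      S (lam * (v₀ + ∑ p ∈ Finset.Icc 1 N,
        Real.sqrt |J p| * (z p * Complex.exp (-(2 * p * y) * Complex.I)).re)))
    (hB : ∀ k v₀ z, B k v₀ z = ((ε k * Real.sqrt |J k| / π : ℝ) : ℂ) *
      ∫ y in (-(π/2))..(π/2),
        ((S (lam * (v₀ + ∑ p ∈ Finset.Icc 1 N,
          Real.sqrt |J p| * (z p * Complex.exp (-(2 * p * y) * Complex.I)).re)) : ℝ) : ℂ)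
          * Complex.exp (2 * k * y * Complex.I)) :
    ∀ (γ v₀ : ℝ) (z : ℕ → ℂ),
      B₀ v₀ (fun p => Complex.exp (2 * p * γ * Complex.I) * z p) = B₀ v₀ z ∧
      (∀ k, 1 ≤ k → k ≤ N →
        B k v₀ (fun p => Complex.exp (2 * p * γ * Complex.I) * z p)
          = Complex.exp (2 * k * γ * Complex.I) * B k v₀ z) ∧
      B₀ v₀ (fun p => (starRingEnd ℂ) (z p)) = B₀ v₀ z ∧
      (∀ k, 1 ≤ k → k ≤ N →
        B k v₀ (fun p => (starRingEnd ℂ) (z p)) = (starRingEnd ℂ) (B k v₀ z)) := by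
  intro γ v₀ z
  set g : (ℕ → ℂ) → ℝ → ℝ :=
    fun w y => S (lam * (v₀ + trigSum (Finset.Icc 1 N) (fun p => Real.sqrt |J p|) w y)) with hg
  have hB₀g (w) : B₀ v₀ w = (1 / π) * ∫ y in (-(π/2))..(π/2), g w y := hB₀ v₀ w
  have hBg (k w) : B k v₀ w = ((ε k * Real.sqrt |J k| / π : ℝ) : ℂ) *
      ∫ y in (-(π/2))..(π/2), (g w y : ℂ) * Complex.exp (2 * k * y * Complex.I) := hB k v₀ w
  have hper : Function.Periodic (g z) π :=
    (trigSum_periodic _ _ z).comp fun t => S (lam * (v₀ + t))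
  have hrot (y) : g (fun p => Complex.exp (2 * p * γ * Complex.I) * z p) y = g z (y - γ) := by
    simp only [hg, trigSum_rotate]
  have hconj (y) : g (fun p => starRingEnd ℂ (z p)) y = g z (-y) := by
    simp only [hg, trigSum_conj]
  refine ⟨?_, fun k _ _ => ?_, ?_, fun k _ _ => ?_⟩
  · simp only [hB₀g, hrot, intervalIntegral_comp_sub_of_periodic hper]
  · have hshift := intervalIntegral_comp_sub_mul_exp (g := fun y => (g z y : ℂ))
      (hper.comp fun t : ℝ => (t : ℂ)) k γ
    simp only [Int.cast_natCast] at hshift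
    simp only [hBg, hrot, hshift, mul_left_comm]
  · simp only [hB₀g, hconj, intervalIntegral.integral_comp_neg, neg_neg]
  · have hreflect := intervalIntegral_comp_neg_mul_exp (g z) k (π / 2)
    simp only [Complex.ofReal_natCast] at hreflect
    simp only [hBg, hconj, hreflect, map_mul, Complex.conj_ofReal]

/-- the finite-dimensional Ring Model system with zero input is
`O(2)`-equivariant under `T_γ·(v₀, z₁, …, z_N) = (v₀, e^{2iγ}z₁, …, e^{2iNγ}z_N)` and
`R·(v₀, z₁, …, z_N) = (v₀, conj z₁, …, conj z_N)`. -/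
theorem stmt_18 (N : ℕ) (hN : 1 ≤ N) (lam : ℝ) (hlam : 0 < lam)
    (J ε : ℕ → ℝ) (hε : ∀ k, ε k = -1 ∨ ε k = 1)
    (B₀ : ℝ → (ℕ → ℂ) → ℝ) (B : ℕ → ℝ → (ℕ → ℂ) → ℂ)
    (hB₀ : ∀ v₀ z, B₀ v₀ z = (1 / π) * ∫ y in (-(π/2))..(π/2),
      S (lam * (v₀ + ∑ p ∈ Finset.Icc 1 N,
        Real.sqrt |J p| * (z p * Complex.exp (-(2 * p * y) * Complex.I)).re)))
    (hB : ∀ k v₀ z, B k v₀ z = ((ε k * Real.sqrt |J k| / π : ℝ) : ℂ) *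
      ∫ y in (-(π/2))..(π/2),
        ((S (lam * (v₀ + ∑ p ∈ Finset.Icc 1 N,
          Real.sqrt |J p| * (z p * Complex.exp (-(2 * p * y) * Complex.I)).re)) : ℝ) : ℂ)
          * Complex.exp (2 * k * y * Complex.I)) :
    ∀ (γ v₀ : ℝ) (z : ℕ → ℂ),
      B₀ v₀ (fun p => Complex.exp (2 * p * γ * Complex.I) * z p) = B₀ v₀ z ∧
      (∀ k, 1 ≤ k → k ≤ N →
        B k v₀ (fun p => Complex.exp (2 * p * γ * Complex.I) * z p)
          = Complex.exp (2 * k * γ * Complex.I) * B k v₀ z) ∧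
      B₀ v₀ (fun p => (starRingEnd ℂ) (z p)) = B₀ v₀ z ∧
      (∀ k, 1 ≤ k → k ≤ N →
        B k v₀ (fun p => (starRingEnd ℂ) (z p)) = (starRingEnd ℂ) (B k v₀ z)) :=
  stmt_18_general N lam J ε B₀ B hB₀ hB
end
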